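/- For all x ∈ (0, π/2], sin(2x)/(4x) + 1/2 - sin²(x)/x² ≤ 1 - sin(x)/x; i.e., the multi-projection error e_m(L, κ) is at most the one-time-projection error e_o(L, κ) whenever 0 < Lκ ≤ π/2. -/

import Mathlib

/-!
Over the common denominator `2x²`, `e_o - e_m = ((x - sin x)² + sin x (sin x - x cos x)) / (2x²)`.
Both summands of the numerator are nonnegative on `[0, π]`: `sin x ≤ x`, and `x cos x ≤ sin x`
because `x ≤ tan x` below `π/2` while `cos x ≤ 0` beyond it.
-/

open Real

namespace Real

theorem mul_cos_le_sin {x : ℝ} (h0 : 0 ≤ x) (hπ : x ≤ π) : x * cos x ≤ sin x := by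
  have hsin : 0 ≤ sin x := sin_nonneg_of_nonneg_of_le_pi h0 hπ
  rcases lt_or_ge x (π / 2) with hlt | hge
  · have hcos : 0 < cos x := cos_pos_of_mem_Ioo ⟨by linarith [pi_pos], hlt⟩
    calc x * cos x ≤ tan x * cos x := mul_le_mul_of_nonneg_right (le_tan h0 hlt) hcos.le
      _ = sin x := tan_mul_cos hcos.ne'
  · have hcos : cos x ≤ 0 := cos_nonpos_of_pi_div_two_le_of_le hge (by linarith)
    nlinarith

end Real

/-- The paper's one-time-projection error `e_o(L, κ)` at `κ = 1`, `x = L`. -/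
noncomputable def oneTimeProjError (x : ℝ) : ℝ := 1 - sin x / x

/-- The paper's multi-projection error `e_m(L, κ)` at `κ = 1`, `x = L`. -/
noncomputable def multiProjError (x : ℝ) : ℝ := sin (2 * x) / (4 * x) + 1 / 2 - sin x ^ 2 / x ^ 2

theorem oneTimeProjError_sub_multiProjError {x : ℝ} (hx : x ≠ 0) :
    oneTimeProjError x - multiProjError x
      = ((x - sin x) ^ 2 + sin x * (sin x - x * cos x)) / (2 * x ^ 2) := by
  rw [oneTimeProjError, multiProjError, sin_two_mul]
  field_simp
  ring

theorem multiProjError_le_oneTimeProjError {x : ℝ} (h0 : 0 < x) (hπ : x ≤ π) :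
    multiProjError x ≤ oneTimeProjError x := by
  have hsin : 0 ≤ sin x := sin_nonneg_of_nonneg_of_le_pi h0.le hπ
  have hcos : x * cos x ≤ sin x := mul_cos_le_sin h0.le hπ
  rw [← sub_nonneg, oneTimeProjError_sub_multiProjError h0.ne']
  exact div_nonneg (add_nonneg (sq_nonneg _) (mul_nonneg hsin (sub_nonneg.mpr hcos)))
    (by positivity)

/-- For `x ∈ (0, π/2]`, the multi-projection error is at most the
one-time-projection error: `sin(2x)/(4x) + 1/2 - sin²x/x² ≤ 1 - sin x / x`. -/
theorem stmt_13 (x : ℝ) (hx : x ∈ Set.Ioc 0 (Real.pi / 2)) :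
    Real.sin (2 * x) / (4 * x) + 1 / 2 - Real.sin x ^ 2 / x ^ 2
      ≤ 1 - Real.sin x / x :=
  multiProjError_le_oneTimeProjError hx.1 (hx.2.trans (by linarith [Real.pi_pos]))
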